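/- arXiv:2310.13862 — 6 statements merged into one kernel-verified Lean document; each statement's English description precedes it below -/
import Mathlib

section
/- Let q₀ ≥ q₁ ≥ ⋯ ≥ q_{n−1} be a nonincreasing sequence of reals and let m ≥ 1 with n ≥ 2m+1. Among all ways to append m real values to this sequence, the median of the resulting n+m values is maximized when all m appended values exceed q₀, and the maximum achievable median equals (q_{⌊(n−m−1)/2⌋} + q_{⌊(n−m)/2⌋})/2, where median of an even-length list is the average of the two middle order statistics and of an odd-length list is the middle order statistic. -/
/-!
Counted from the bottom, order statistics can only decrease when values are added to a sample.
Both middle positions `⌊(n+m-1)/2⌋` and `⌊(n+m)/2⌋` of the `n + m` values lie below `n`, so the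
median is at most the average of the corresponding order statistics of the `q`'s alone, which are
`q ⌊(n-m)/2⌋` and `q ⌊(n-m-1)/2⌋`. When every added value exceeds `q 0`, the added values occupy
the top `m` positions of the sorted list, so the bound is attained.
-/

open Finset

/-- Median of a multiset of reals: average of the two middle order statistics
(equal to the middle one for odd cardinality). -/
noncomputable def med (s : Multiset ℝ) : ℝ :=
  ((s.sort (· ≤ ·)).getD ((Multiset.card s - 1) / 2) 0 +
    (s.sort (· ≤ ·)).getD (Multiset.card s / 2) 0) / 2

/-- `m`-trimmed mean: remove the `m` largest and `m` smallest values and average the rest. -/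
noncomputable def trimmedMean (m : ℕ) (s : Multiset ℝ) : ℝ :=
  ((((s.sort (· ≤ ·)).drop m).take (Multiset.card s - 2 * m)).sum) /
    ((Multiset.card s : ℝ) - 2 * m)

/-- The multiset of the first `n` values of `q`. -/
noncomputable def qMs (n : ℕ) (q : ℕ → ℝ) : Multiset ℝ :=
  (Finset.range n).val.map q

theorem List.Sublist.getElem_le_getElem_of_pairwise {α : Type*} [Preorder α] {l₁ l₂ : List α}
    (h : l₁.Sublist l₂) (hs : l₂.Pairwise (· ≤ ·)) {i : ℕ} (h₁ : i < l₁.length)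
    (h₂ : i < l₂.length) : l₂[i] ≤ l₁[i] := by
  obtain ⟨f, hf⟩ := List.sublist_iff_exists_orderEmbedding_getElem?_eq.mp h
  have hfi := hf i
  rw [List.getElem?_eq_getElem h₁, eq_comm, List.getElem?_eq_some_iff] at hfi
  obtain ⟨hfi, hget⟩ := hfi
  rw [← hget]
  exact hs.rel_get_of_le (a := ⟨i, h₂⟩) (b := ⟨f i, hfi⟩) (f.strictMono.id_le i)

namespace Multiset

variable {α : Type*} [LinearOrder α]

theorem getD_sort_le_getD_sort_of_le {s u : Multiset α} (h : s ≤ u) {i : ℕ}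
    (hi : i < card s) (d : α) : (u.sort (· ≤ ·)).getD i d ≤ (s.sort (· ≤ ·)).getD i d := by
  have hsub : (s.sort (· ≤ ·)).Sublist (u.sort (· ≤ ·)) :=
    List.sublist_of_subperm_of_pairwise (coe_le.mp (by simpa using h))
      (pairwise_sort _ _) (pairwise_sort _ _)
  have hu : i < card u := hi.trans_le (card_le_card h)
  rw [List.getD_eq_getElem _ _ (by simpa using hu), List.getD_eq_getElem _ _ (by simpa using hi)]
  exact hsub.getElem_le_getElem_of_pairwise (pairwise_sort _ _) _ _

theorem sort_add_of_forall_le {s t : Multiset α} (h : ∀ a ∈ s, ∀ b ∈ t, a ≤ b) :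
    (s + t).sort (· ≤ ·) = s.sort (· ≤ ·) ++ t.sort (· ≤ ·) := by
  refine List.Perm.eq_of_pairwise' (r := (· ≤ ·)) (pairwise_sort _ _) ?_ ?_
  · exact List.pairwise_append.mpr ⟨pairwise_sort _ _, pairwise_sort _ _,
      fun a ha b hb => h a ((mem_sort _).mp ha) b ((mem_sort _).mp hb)⟩
  · exact coe_eq_coe.mp (by rw [← coe_add, sort_eq, sort_eq, sort_eq])

end Multiset

theorem sort_qMs {n : ℕ} {q : ℕ → ℝ} (hq : AntitoneOn q (Set.Iio n)) :
    (qMs n q).sort (· ≤ ·) = ((List.range n).map q).reverse := by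
  refine List.Perm.eq_of_pairwise' (r := (· ≤ ·)) (Multiset.pairwise_sort _ _) ?_ ?_
  · rw [List.pairwise_reverse, List.pairwise_iff_getElem]
    intro i j hi hj hij
    simp only [List.length_map, List.length_range] at hi hj
    simpa using hq hi hj hij.le
  · refine (Multiset.coe_eq_coe.mp ?_).trans (List.reverse_perm _).symm
    rw [Multiset.sort_eq]
    simp [qMs, Finset.range_val, Multiset.range]

theorem getD_sort_qMs {n : ℕ} {q : ℕ → ℝ} (hq : AntitoneOn q (Set.Iio n)) {k : ℕ}
    (hk : k < n) : ((qMs n q).sort (· ≤ ·)).getD k 0 = q (n - 1 - k) := by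
  rw [sort_qMs hq, List.getD_eq_getElem _ _ (by simpa using hk), List.getElem_reverse]
  simp

theorem card_qMs_add {n m : ℕ} {q : ℕ → ℝ} {t : Multiset ℝ} (ht : Multiset.card t = m) :
    Multiset.card (qMs n q + t) = n + m := by
  simp [qMs, ht]

theorem getD_sort_qMs_add_le {n : ℕ} {q : ℕ → ℝ} (hq : AntitoneOn q (Set.Iio n))
    (t : Multiset ℝ) {k : ℕ} (hk : k < n) :
    ((qMs n q + t).sort (· ≤ ·)).getD k 0 ≤ q (n - 1 - k) := by
  rw [← getD_sort_qMs hq hk]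
  exact Multiset.getD_sort_le_getD_sort_of_le (Multiset.le_add_right _ _) (by simpa [qMs]) _

theorem getD_sort_qMs_add_of_lt {n : ℕ} {q : ℕ → ℝ} (hq : AntitoneOn q (Set.Iio n))
    {t : Multiset ℝ} (ht : ∀ x ∈ t, q 0 < x) {k : ℕ} (hk : k < n) :
    ((qMs n q + t).sort (· ≤ ·)).getD k 0 = q (n - 1 - k) := by
  have hle : ∀ a ∈ qMs n q, ∀ b ∈ t, a ≤ b := by
    intro a ha b hb
    obtain ⟨i, hi, rfl⟩ := Multiset.mem_map.mp ha
    have hi : i < n := by simpa using hi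
    exact (hq (Nat.zero_lt_of_lt hi) hi i.zero_le).trans (ht b hb).le
  rw [Multiset.sort_add_of_forall_le hle, List.getD_append _ _ _ _ (by simpa [qMs] using hk),
    getD_sort_qMs hq hk]

theorem stmt5_general (n m : ℕ) (hn : 2 * m + 1 ≤ n) (q : ℕ → ℝ)
    (hq : ∀ i j, i ≤ j → j < n → q j ≤ q i) :
    (∀ t : Multiset ℝ, Multiset.card t = m →
      med (qMs n q + t) ≤ (q ((n - m - 1) / 2) + q ((n - m) / 2)) / 2) ∧
    (∀ t : Multiset ℝ, Multiset.card t = m → (∀ x ∈ t, q 0 < x) →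
      med (qMs n q + t) = (q ((n - m - 1) / 2) + q ((n - m) / 2)) / 2) := by
  have hanti : AntitoneOn q (Set.Iio n) := fun i _ j hj hij => hq i j hij hj
  have hlo : (n + m - 1) / 2 < n := by omega
  have hhi : (n + m) / 2 < n := by omega
  have hlo' : n - 1 - (n + m - 1) / 2 = (n - m) / 2 := by omega
  have hhi' : n - 1 - (n + m) / 2 = (n - m - 1) / 2 := by omega
  refine ⟨fun t ht => ?_, fun t ht htq => ?_⟩
  · have h₁ := getD_sort_qMs_add_le hanti t hlo
    have h₂ := getD_sort_qMs_add_le hanti t hhi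
    rw [hlo'] at h₁
    rw [hhi'] at h₂
    rw [med, card_qMs_add ht]
    linarith
  · rw [med, card_qMs_add ht, getD_sort_qMs_add_of_lt hanti htq hlo,
      getD_sort_qMs_add_of_lt hanti htq hhi, hlo', hhi', add_comm]

theorem stmt5 (n m : ℕ) (hm : 1 ≤ m) (hn : 2 * m + 1 ≤ n) (q : ℕ → ℝ)
    (hq : ∀ i j, i ≤ j → j < n → q j ≤ q i) :
    (∀ t : Multiset ℝ, Multiset.card t = m →
      med (qMs n q + t) ≤ (q ((n - m - 1) / 2) + q ((n - m) / 2)) / 2) ∧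
    (∀ t : Multiset ℝ, Multiset.card t = m → (∀ x ∈ t, q 0 < x) →
      med (qMs n q + t) = (q ((n - m - 1) / 2) + q ((n - m) / 2)) / 2) :=
  stmt5_general n m hn q hq
end

section
/- Let q₀ ≥ ⋯ ≥ q_{n−1} be reals, m ≥ 1 with n ≥ 2m+1, and let w* satisfy q_{⌊(n+m−1)/2⌋} ≤ w* ≤ q_{⌊(n−m)/2⌋}. If all m appended values equal w*, then the median of the resulting n+m values equals w*. -/
/-! In the ascending sort of the `n + m` values, at most `k` entries lie strictly below `w*`
and fewer than `n + m - k` lie strictly above it, for both middle indices `k`: only the `q i`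
with `i > ⌊(n-m)/2⌋` can be below `w*`, only those with `i < ⌊(n+m-1)/2⌋` can be above it, and
the appended copies of `w*` count on neither side. An entry of a sorted list with that property
must equal `w*`. -/

open Finset

namespace List

variable {α : Type*} [LinearOrder α] {L : List α} {k : ℕ} {w : α}

theorem Pairwise.lt_countP_lt_of_getElem_lt (hL : L.Pairwise (· ≤ ·)) (hk : k < L.length)
    (h : L[k] < w) : k < L.countP (· < w) := by
  have hprefix : ∀ a ∈ L.take (k + 1), a < w := by
    intro a ha
    obtain ⟨i, hi, rfl⟩ := mem_iff_getElem.1 ha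
    rw [length_take] at hi
    rw [getElem_take]
    exact (hL.rel_get_of_le (a := ⟨i, by omega⟩) (b := ⟨k, hk⟩)
      (Fin.mk_le_mk.2 (by omega))).trans_lt h
  calc k < (L.take (k + 1)).countP (· < w) := by
        rw [countP_eq_length.2 (by simpa using hprefix), length_take]; omega
    _ ≤ L.countP (· < w) := (take_sublist _ _).countP_le

theorem Pairwise.length_le_add_countP_gt_of_lt_getElem (hL : L.Pairwise (· ≤ ·))
    (hk : k < L.length) (h : w < L[k]) : L.length ≤ k + L.countP (w < ·) := by
  have hsuffix : ∀ a ∈ L.drop k, w < a := by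
    intro a ha
    obtain ⟨i, hi, rfl⟩ := mem_iff_getElem.1 ha
    rw [length_drop] at hi
    rw [getElem_drop]
    exact h.trans_le (hL.rel_get_of_le (a := ⟨k, hk⟩) (b := ⟨k + i, by omega⟩)
      (Fin.mk_le_mk.2 (k.le_add_right i)))
  calc L.length = k + (L.drop k).countP (w < ·) := by
        rw [countP_eq_length.2 (by simpa using hsuffix), length_drop]; omega
    _ ≤ k + L.countP (w < ·) := Nat.add_le_add_left (drop_sublist _ _).countP_le _

end List

namespace Multiset

variable {α : Type*} [LinearOrder α]

theorem getD_sort_eq_of_countP_le (s : Multiset α) {w : α} {k : ℕ} (d : α)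
    (hlt : s.countP (· < w) ≤ k) (hgt : k + s.countP (w < ·) < card s) :
    (s.sort (· ≤ ·)).getD k d = w := by
  set L := s.sort (· ≤ ·)
  have hL : L.Pairwise (· ≤ ·) := s.pairwise_sort _
  have hcoe : (L : Multiset α) = s := s.sort_eq _
  have hk : k < L.length := by rw [s.length_sort]; omega
  rw [← hcoe, coe_countP] at hlt hgt
  rw [coe_card] at hgt
  rw [List.getD_eq_getElem L d hk]
  rcases lt_trichotomy L[k] w with h | h | h
  · exact absurd (hL.lt_countP_lt_of_getElem_lt hk h) (by simpa using hlt.not_gt)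
  · exact h
  · exact absurd (hL.length_le_add_countP_gt_of_lt_getElem hk h) (by simpa using hgt)

end Multiset

theorem med_eq_of_countP_le (s : Multiset ℝ) {w : ℝ} (hcard : 0 < Multiset.card s)
    (hlt : s.countP (· < w) ≤ (Multiset.card s - 1) / 2)
    (hgt : s.countP (w < ·) ≤ (Multiset.card s - 1) / 2) : med s = w := by
  rw [med, s.getD_sort_eq_of_countP_le 0 hlt (by omega),
    s.getD_sort_eq_of_countP_le 0 (hlt.trans (by omega)) (by omega)]
  ring

section qMs

variable {n : ℕ} {q : ℕ → ℝ} {w : ℝ}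

theorem card_qMs : Multiset.card (qMs n q) = n := by
  simp [qMs]

theorem qMs_countP_eq (p : ℝ → Prop) [DecidablePred p] :
    (qMs n q).countP p = #{i ∈ range n | p (q i)} := by
  rw [qMs, Multiset.countP_map]
  rfl

theorem qMs_countP_lt_le (hq : AntitoneOn q (Set.Iio n)) {a : ℕ} (ha : a < n) (hw : w ≤ q a) :
    (qMs n q).countP (· < w) ≤ n - (a + 1) := by
  rw [qMs_countP_eq, ← Nat.card_Ico]
  refine card_le_card fun i hi => ?_
  rw [mem_filter, mem_range] at hi
  rw [mem_Ico]
  refine ⟨?_, hi.1⟩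
  by_contra! hia
  exact (hw.trans (hq (Set.mem_Iio.2 hi.1) (Set.mem_Iio.2 ha) (by omega))).not_gt hi.2

theorem qMs_countP_gt_le (hq : AntitoneOn q (Set.Iio n)) {b : ℕ} (hw : q b ≤ w) :
    (qMs n q).countP (w < ·) ≤ b := by
  rw [qMs_countP_eq, ← card_range b]
  refine card_le_card fun i hi => ?_
  rw [mem_filter, mem_range] at hi
  rw [mem_range]
  by_contra! hbi
  have hb : b < n := by omega
  exact ((hq (Set.mem_Iio.2 hb) (Set.mem_Iio.2 hi.1) hbi).trans hw).not_gt hi.2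

end qMs

theorem stmt9_general (n m : ℕ) (hn : 2 * m + 1 ≤ n) (q : ℕ → ℝ)
    (hq : ∀ i j, i ≤ j → j < n → q j ≤ q i) (wstar : ℝ)
    (hw1 : q ((n + m - 1) / 2) ≤ wstar) (hw2 : wstar ≤ q ((n - m) / 2)) :
    med (qMs n q + Multiset.replicate m wstar) = wstar := by
  have hanti : AntitoneOn q (Set.Iio n) := fun i _ j hj hij => hq i j hij hj
  have hrep_lt : (Multiset.replicate m wstar).countP (· < wstar) = 0 :=
    Multiset.countP_eq_zero.2 fun a ha => (Multiset.eq_of_mem_replicate ha).symm ▸ lt_irrefl wstar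
  have hrep_gt : (Multiset.replicate m wstar).countP (wstar < ·) = 0 :=
    Multiset.countP_eq_zero.2 fun a ha => (Multiset.eq_of_mem_replicate ha).symm ▸ lt_irrefl wstar
  have hlt := qMs_countP_lt_le hanti (by omega : (n - m) / 2 < n) hw2
  have hgt := qMs_countP_gt_le hanti hw1
  have hcard : Multiset.card (qMs n q + Multiset.replicate m wstar) = n + m := by
    rw [Multiset.card_add, card_qMs, Multiset.card_replicate]
  apply med_eq_of_countP_le _ (by omega)
  · rw [Multiset.countP_add, hrep_lt, hcard]; omega
  · rw [Multiset.countP_add, hrep_gt, hcard]; omega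

theorem stmt9 (n m : ℕ) (hm : 1 ≤ m) (hn : 2 * m + 1 ≤ n) (q : ℕ → ℝ)
    (hq : ∀ i j, i ≤ j → j < n → q j ≤ q i) (wstar : ℝ)
    (hw1 : q ((n + m - 1) / 2) ≤ wstar) (hw2 : wstar ≤ q ((n - m) / 2)) :
    med (qMs n q + Multiset.replicate m wstar) = wstar :=
  stmt9_general n m hn q hq wstar hw1 hw2
end

section
/- Let q₀ ≥ ⋯ ≥ q_{n−1} be reals, m ≥ 1, n ≥ 2m+1, b > 0, u = ⌊(n−m)/2⌋, and let w* satisfy q_u < w* ≤ (q_{⌊(n−m−1)/2⌋} + q_u)/2. Append the m values: w₍ₙ₎ = 2w* − q_u and w₍ₙ₊₁₎ = ⋯ = w₍ₙ₊ₘ₋₁₎ = q₀ + b. Then the median of the resulting n+m values equals w*. -/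
/-!
Since `q_u < w* ≤ (q_{⌊(n-m-1)/2⌋} + q_u)/2`, the two indices differ (otherwise `w* ≤ q_u`),
so `n - m = 2u` and the bound reads `2w* - q_u ≤ q_{u-1}`. The `n + m` values then split into
the `u + m - 1` values `q_{u+1}, …, q_{n-1}` (all `≤ q_u`), the pair `q_u ≤ 2w* - q_u`, and the
`u + m - 1` values `q_0, …, q_{u-1}, q_0 + b, …` (all `≥ 2w* - q_u`). Equal sizes on both sides
put the pair in the middle, so the median is their average `w*`.
-/

open Finset

theorem Multiset.sort_add_of_forall_le_s10 {α : Type*} [LinearOrder α] {s t : Multiset α}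
    (h : ∀ a ∈ s, ∀ b ∈ t, a ≤ b) :
    (s + t).sort (· ≤ ·) = s.sort (· ≤ ·) ++ t.sort (· ≤ ·) := by
  refine List.Perm.eq_of_pairwise' (Multiset.pairwise_sort _ _)
    (List.pairwise_append.2 ⟨Multiset.pairwise_sort _ _, Multiset.pairwise_sort _ _, ?_⟩) ?_
  · simpa only [Multiset.mem_sort] using h
  · rw [← Multiset.coe_eq_coe, ← Multiset.coe_add, Multiset.sort_eq, Multiset.sort_eq,
      Multiset.sort_eq]

theorem Multiset.sort_pair {α : Type*} [LinearOrder α] {a b : α} (hab : a ≤ b) :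
    ({a, b} : Multiset α).sort (· ≤ ·) = [a, b] := by
  rw [Multiset.insert_eq_cons, Multiset.sort_cons _ _ _ (by simpa using hab),
    Multiset.sort_singleton]

theorem med_add_pair_add {s t : Multiset ℝ} {a b : ℝ} (hab : a ≤ b)
    (hs : ∀ x ∈ s, x ≤ a) (ht : ∀ x ∈ t, b ≤ x) (hst : Multiset.card s = Multiset.card t) :
    med (s + {a, b} + t) = (a + b) / 2 := by
  have hsort : (s + {a, b} + t).sort (· ≤ ·) = s.sort (· ≤ ·) ++ a :: b :: t.sort (· ≤ ·) := by
    rw [Multiset.sort_add_of_forall_le_s10, Multiset.sort_add_of_forall_le_s10, Multiset.sort_pair hab]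
    · simp
    · simpa using fun x hx => ⟨hs x hx, (hs x hx).trans hab⟩
    · intro x hx y hy
      refine le_trans ?_ (ht y hy)
      simp only [Multiset.mem_add, Multiset.insert_eq_cons, Multiset.mem_cons,
        Multiset.mem_singleton] at hx
      rcases hx with hx | rfl | rfl
      exacts [(hs x hx).trans hab, hab, le_rfl]
  have hcard : Multiset.card (s + {a, b} + t) = 2 * Multiset.card s + 2 := by
    simp only [Multiset.card_add, Multiset.insert_eq_cons, Multiset.card_cons,
      Multiset.card_singleton, hst]
    omega
  rw [med, hsort, hcard]
  have hlo : (2 * Multiset.card s + 2 - 1) / 2 = (s.sort (· ≤ ·)).length := by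
    rw [Multiset.length_sort]; omega
  have hhi : (2 * Multiset.card s + 2) / 2 = (s.sort (· ≤ ·)).length + 1 := by
    rw [Multiset.length_sort]; omega
  rw [hlo, hhi, List.getD_append_right _ _ _ _ le_rfl, List.getD_append_right _ _ _ _ (by omega)]
  simp

theorem stmt10_general (n m : ℕ) (hm : 1 ≤ m) (q : ℕ → ℝ)
    (hq : ∀ i j, i ≤ j → j < n → q j ≤ q i) (b wstar : ℝ) (hb : 0 < b)
    (u : ℕ) (hu : u = (n - m) / 2)
    (hw1 : q u < wstar) (hw2 : wstar ≤ (q ((n - m - 1) / 2) + q u) / 2) :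
    med (qMs n q + ({2 * wstar - q u} + Multiset.replicate (m - 1) (q 0 + b))) = wstar := by
  set v := (n - m - 1) / 2 with hv_def
  have hvu : v < u := lt_of_le_of_ne (by omega) fun h => by rw [h] at hw2; linarith
  obtain ⟨rfl, hv⟩ : n = 2 * u + m ∧ v = u - 1 := by omega
  have hsplit : qMs (2 * u + m) q + ({2 * wstar - q u} + Multiset.replicate (m - 1) (q 0 + b)) =
      (Multiset.range (u + m - 1)).map (fun i => q (u + 1 + i)) + {q u, 2 * wstar - q u} +
        ((Multiset.range u).map q + Multiset.replicate (m - 1) (q 0 + b)) := by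
    rw [qMs, Finset.range_val, show 2 * u + m = (u + 1) + (u + m - 1) by omega,
      Multiset.range_add, Multiset.range_succ, Multiset.map_add, Multiset.map_map,
      Multiset.map_cons, Multiset.insert_eq_cons, ← Multiset.singleton_add,
      ← Multiset.singleton_add]
    simp only [Function.comp_def]
    abel
  rw [hsplit, med_add_pair_add (by linarith)]
  · ring
  · simp only [Multiset.mem_map, Multiset.mem_range, forall_exists_index, and_imp]
    rintro _ i hi rfl
    exact hq u (u + 1 + i) (by omega) (by omega)
  · have hxv : 2 * wstar - q u ≤ q v := by linarith
    simp only [Multiset.mem_add, Multiset.mem_map, Multiset.mem_range, Multiset.mem_replicate]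
    rintro _ (⟨i, hi, rfl⟩ | ⟨-, rfl⟩)
    · exact hxv.trans (hq i v (by omega) (by omega))
    · linarith [hq 0 v (Nat.zero_le _) (by omega)]
  · simp only [Multiset.card_map, Multiset.card_range, Multiset.card_add, Multiset.card_replicate]
    omega

theorem stmt10 (n m : ℕ) (hm : 1 ≤ m) (hn : 2 * m + 1 ≤ n) (q : ℕ → ℝ)
    (hq : ∀ i j, i ≤ j → j < n → q j ≤ q i) (b wstar : ℝ) (hb : 0 < b)
    (u : ℕ) (hu : u = (n - m) / 2)
    (hw1 : q u < wstar) (hw2 : wstar ≤ (q ((n - m - 1) / 2) + q u) / 2) :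
    med (qMs n q + ({2 * wstar - q u} + Multiset.replicate (m - 1) (q 0 + b))) = wstar :=
  stmt10_general n m hm q hq b wstar hb u hu hw1 hw2
end

section
/- Let q₀ ≥ ⋯ ≥ q_{n−1} be reals, m ≥ 1, n ≥ 2m+1, b > 0, v = ⌊(n+m−1)/2⌋, and let w* satisfy (q_v + q_{⌊(n+m)/2⌋})/2 ≤ w* < q_v. Append the m values: w₍ₙ₎ = 2w* − q_v and w₍ₙ₊₁₎ = ⋯ = w₍ₙ₊ₘ₋₁₎ = q_{n−1} − b. Then the median of the resulting n+m values equals w*. -/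
/-!
If `n + m` were odd, both middle indices of the `n + m` values would be `v`, and the hypothesis
`(q v + q ((n + m) / 2)) / 2 ≤ w* < q v` would be contradictory; so `n + m = 2 v + 2`. The
inserted value `x = 2 w* - q v` lies between `q (v + 1)` and `q v`, and the `m - 1` padding values
lie below everything. In descending order the sample is therefore
`q 0, …, q v, x, q (v + 1), …, q (n - 1), c, …, c`, whose middle entries are `q v` and `x`,
with average `w*`.
-/

open Finset

theorem med_coe_of_pairwise_ge {L : List ℝ} (hL : L.Pairwise (· ≥ ·)) :
    med L = (L.getD ((L.length - 1) / 2) 0 + L.getD (L.length / 2) 0) / 2 := by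
  rcases Nat.eq_zero_or_pos L.length with hnil | hpos
  · simp [List.length_eq_zero_iff.1 hnil, med]
  have hsort : (L : Multiset ℝ).sort (· ≤ ·) = L.reverse := by
    rw [← Multiset.coe_reverse, Multiset.coe_sort,
      List.mergeSort_eq_self _ (List.pairwise_reverse.2 hL)]
  rw [med, hsort, Multiset.coe_card, List.getD_reverse _ (by omega),
    List.getD_reverse _ (by omega), add_comm]
  congr 4 <;> omega

/-- The attacked sample in descending order, when `q (k + 1) ≤ x ≤ q k` and the `r` padding values
`c` lie below all of `q`. -/
def insertPad (q : ℕ → ℝ) (n k : ℕ) (x c : ℝ) (r : ℕ) : List ℝ :=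
  (List.range (k + 1)).map q ++
    x :: ((List.range' (k + 1) (n - (k + 1))).map q ++ List.replicate r c)

section insertPad

variable {q : ℕ → ℝ} {n k : ℕ} {x c : ℝ} {r : ℕ}

theorem coe_insertPad (hk : k + 1 ≤ n) :
    (insertPad q n k x c r : Multiset ℝ) = qMs n q + ({x} + Multiset.replicate r c) := by
  obtain ⟨l, rfl⟩ := Nat.exists_eq_add_of_le hk
  have hsplit : List.range (k + 1 + l) = List.range (k + 1) ++ List.range' (k + 1) l := by
    simpa [List.range_eq_range'] using
      (List.range'_append (s := 0) (m := k + 1) (n := l) (step := 1)).symm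
  rw [insertPad, Nat.add_sub_cancel_left, qMs, Finset.range_val, ← Multiset.coe_range,
    Multiset.map_coe, hsplit, List.map_append]
  simp only [← Multiset.coe_add, ← Multiset.cons_coe, ← Multiset.singleton_add,
    Multiset.coe_replicate]
  abel

theorem length_insertPad (hk : k + 1 ≤ n) : (insertPad q n k x c r).length = n + 1 + r := by
  simp only [insertPad, List.length_append, List.length_map, List.length_range, List.length_cons,
    List.length_range', List.length_replicate]
  omega

theorem insertPad_getD_self : (insertPad q n k x c r).getD k 0 = q k := by
  rw [insertPad, List.getD_append _ _ _ _ (by simp), List.getD_eq_getElem _ _ (by simp)]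
  simp

theorem insertPad_getD_succ : (insertPad q n k x c r).getD (k + 1) 0 = x := by
  rw [insertPad, List.getD_append_right _ _ _ _ (by simp)]
  simp

theorem pairwise_ge_map_range' {a l : ℕ} (hq : ∀ i j, i ≤ j → j < a + l → q j ≤ q i) :
    ((List.range' a l).map q).Pairwise (· ≥ ·) := by
  refine List.pairwise_map.2 ((List.pairwise_lt_range' 1).imp_of_mem fun {i j} _ hj hij => ?_)
  exact hq i j hij.le (List.mem_range'_1.1 hj).2

theorem pairwise_insertPad (hq : ∀ i j, i ≤ j → j < n → q j ≤ q i) (hk : k + 1 < n)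
    (hxk : x ≤ q k) (hxk' : q (k + 1) ≤ x) (hc : c ≤ q (n - 1)) :
    (insertPad q n k x c r).Pairwise (· ≥ ·) := by
  have head_ge : ∀ a ∈ (List.range (k + 1)).map q, x ≤ a := by
    simp only [List.mem_map, List.mem_range]
    rintro _ ⟨i, hi, rfl⟩
    exact hxk.trans (hq i k (by omega) (by omega))
  have mid_ge_c : ∀ b ∈ (List.range' (k + 1) (n - (k + 1))).map q, c ≤ b := by
    simp only [List.mem_map, List.mem_range'_1]
    rintro _ ⟨i, hi, rfl⟩
    exact hc.trans (hq i (n - 1) (by omega) (by omega))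
  have rest_le : ∀ y ∈ (List.range' (k + 1) (n - (k + 1))).map q ++ List.replicate r c, y ≤ x := by
    simp only [List.mem_append, List.mem_map, List.mem_range'_1, List.mem_replicate]
    rintro _ (⟨i, hi, rfl⟩ | ⟨-, rfl⟩)
    · exact (hq (k + 1) i hi.1 (by omega)).trans hxk'
    · exact hc.trans ((hq (k + 1) (n - 1) (by omega) (by omega)).trans hxk')
  refine List.pairwise_append.2
    ⟨?_, List.pairwise_cons.2 ⟨rest_le, List.pairwise_append.2 ⟨?_, ?_, ?_⟩⟩, ?_⟩
  · simpa [List.range_eq_range'] using pairwise_ge_map_range' (a := 0) (l := k + 1)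
      fun i j hij hj => hq i j hij (by omega)
  · exact pairwise_ge_map_range' fun i j hij hj => hq i j hij (by omega)
  · exact List.pairwise_replicate.2 (Or.inr le_rfl)
  · intro b hb y hy
    exact List.eq_of_mem_replicate hy ▸ mid_ge_c b hb
  · intro a ha y hy
    refine le_trans ?_ (head_ge a ha)
    rcases List.mem_cons.1 hy with rfl | hy
    · exact le_rfl
    · exact rest_le y hy

end insertPad

theorem stmt11 (n m : ℕ) (hm : 1 ≤ m) (hn : 2 * m + 1 ≤ n) (q : ℕ → ℝ)
    (hq : ∀ i j, i ≤ j → j < n → q j ≤ q i) (b wstar : ℝ) (hb : 0 < b)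
    (v : ℕ) (hv : v = (n + m - 1) / 2)
    (hw1 : (q v + q ((n + m) / 2)) / 2 ≤ wstar) (hw2 : wstar < q v) :
    med (qMs n q + ({2 * wstar - q v} + Multiset.replicate (m - 1) (q (n - 1) - b))) = wstar := by
  have hmid : (n + m) / 2 = v + 1 := by
    by_contra hodd
    rw [show (n + m) / 2 = v by omega] at hw1
    linarith
  rw [hmid] at hw1
  have hk : v + 1 < n := by omega
  have hsorted := pairwise_insertPad (x := 2 * wstar - q v) (c := q (n - 1) - b) (r := m - 1)
    hq hk (by linarith) (by linarith) (by linarith)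
  rw [← coe_insertPad hk.le, med_coe_of_pairwise_ge hsorted, length_insertPad hk.le,
    show (n + 1 + (m - 1) - 1) / 2 = v by omega, show (n + 1 + (m - 1)) / 2 = v + 1 by omega,
    insertPad_getD_self, insertPad_getD_succ]
  ring
end

section
/- Let q₀ ≥ ⋯ ≥ q_{n−1} be reals, m ≥ 1, n ≥ 2m+1, and denote w̃ = (1/(n−2m))·Σ_{h=m}^{n−m−1} q_h and ẉ = (1/(n−m))·Σ_{h=m}^{n−1} q_h. Suppose ẉ ≤ w* ≤ w̃. Then there exists an integer r with n−m ≤ r ≤ n such that w* ≤ (1/(n−m))·((n−r)·q_{m−1} + Σ_{h=m}^{r−1} q_h). -/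
open Finset

theorem stmt12 (n m : ℕ) (hm : 1 ≤ m) (hn : 2 * m + 1 ≤ n) (q : ℕ → ℝ)
    (hq : ∀ i j, i ≤ j → j < n → q j ≤ q i) (wstar : ℝ)
    (hlow : (∑ h ∈ Finset.Ico m n, q h) / ((n : ℝ) - m) ≤ wstar)
    (hhigh : wstar ≤ (∑ h ∈ Finset.Ico m (n - m), q h) / ((n : ℝ) - 2 * m)) :
    ∃ r : ℕ, n - m ≤ r ∧ r ≤ n ∧
      wstar ≤ (1 / ((n : ℝ) - m)) *
        (((n : ℝ) - r) * q (m - 1) + ∑ h ∈ Finset.Ico m r, q h) := by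
  refine ⟨n - m, le_refl _, Nat.sub_le _ _, ?_⟩
  have hcn : (2*m+1 : ℝ) ≤ n := by exact_mod_cast hn
  have ha : (0:ℝ) < (n:ℝ) - 2*m := by push_cast at hcn ⊢; linarith
  have hb : (0:ℝ) < (n:ℝ) - m := by
    have hm' : (1:ℝ) ≤ m := by exact_mod_cast hm
    push_cast at hcn; linarith
  set S := ∑ h ∈ Finset.Ico m (n-m), q h with hSdef
  have hS : S ≤ ((n:ℝ) - 2*m) * q (m-1) := by
    have hle : ∀ x ∈ Finset.Ico m (n-m), q x ≤ q (m-1) := by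
      intro x hx
      simp only [Finset.mem_Ico] at hx
      exact hq (m-1) x (by omega) (by omega)
    have := Finset.sum_le_card_nsmul (Finset.Ico m (n-m)) q (q (m-1)) hle
    rw [Nat.card_Ico] at this
    have hcast : ((n - m - m : ℕ):ℝ) = (n:ℝ) - 2*m := by
      have : n - m - m = n - 2*m := by omega
      rw [this]
      push_cast [Nat.sub_le, (by omega : 2*m ≤ n)]
      ring
    calc S ≤ (n - m - m) • q (m-1) := this
      _ = ((n - m - m : ℕ):ℝ) * q (m-1) := by rw [nsmul_eq_mul]
      _ = ((n:ℝ) - 2*m) * q (m-1) := by rw [hcast]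
  have hcast2 : (n:ℝ) - ((n - m : ℕ):ℝ) = m := by
    push_cast [(by omega : m ≤ n)]; ring
  rw [hcast2]
  have key : S / ((n:ℝ) - 2*m) ≤ (1 / ((n:ℝ) - m)) * ((m:ℝ) * q (m-1) + S) := by
    rw [one_div, inv_mul_eq_div, div_le_div_iff₀ ha hb]
    have hm' : (0:ℝ) ≤ m := by positivity
    nlinarith [hS]
  exact hhigh.trans key
end

section
/- Let q₀ ≥ ⋯ ≥ q_{n−1} be reals, m ≥ 1, n ≥ 2m+1, b > 0. Suppose r with n−m ≤ r ≤ n−1 is the largest integer ≤ n satisfying w* ≤ (1/(n−m))·((n−r)·q_{m−1} + Σ_{h=m}^{r−1} q_h), and define c = ((n−m)·w* − Σ_{h=m}^{r−1} q_h)/(n−r). Append m−n+r copies of q_{n−1} − b and n−r copies of c to the sequence. If additionally q_r < c ≤ q_{m−1}, then the m-trimmed mean of the resulting n+m values equals w*. -/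
open Finset

/-! If the values appended to `q₀ ≥ ⋯ ≥ q_{n-1}` split the whole sample into `m` values at most
`q_r`, then `q_m, …, q_{r-1}` and the `n - r` copies of `c` (all in `[q_r, q_{m-1}]`), then
`q₀, …, q_{m-1}`, the trimmed mean is the average of the middle block, and the definition of `c`
makes that average `w*`. -/

namespace Multiset

variable {α : Type*} [LinearOrder α]

theorem sort_add_of_le {a t : Multiset α} (h : ∀ x ∈ a, ∀ y ∈ t, x ≤ y) :
    (a + t).sort (· ≤ ·) = a.sort (· ≤ ·) ++ t.sort (· ≤ ·) := by
  refine List.Perm.eq_of_pairwise' (r := (· ≤ ·)) (pairwise_sort _ _) ?_ ?_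
  · refine List.pairwise_append.2 ⟨pairwise_sort _ _, pairwise_sort _ _, fun x hx y hy => ?_⟩
    exact h x ((mem_sort _).1 hx) y ((mem_sort _).1 hy)
  · rw [← coe_eq_coe, ← coe_add, sort_eq, sort_eq, sort_eq]

theorem sum_sort [AddCommMonoid α] (s : Multiset α) : (s.sort (· ≤ ·)).sum = s.sum := by
  rw [← sum_coe, sort_eq]

end Multiset

open Multiset in
theorem trimmedMean_add_add {m : ℕ} {low mid high : Multiset ℝ} {a b : ℝ}
    (hlow : card low = m) (hhigh : card high = m) (hab : a ≤ b)
    (hle : ∀ x ∈ low, x ≤ a) (hmem : ∀ x ∈ mid, a ≤ x ∧ x ≤ b) (hge : ∀ x ∈ high, b ≤ x) :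
    trimmedMean m (low + (mid + high)) = mid.sum / card mid := by
  have hlm : ∀ x ∈ low, ∀ y ∈ mid + high, x ≤ y := by
    intro x hx y hy
    rcases mem_add.1 hy with hy | hy
    · exact (hle x hx).trans (hmem y hy).1
    · exact (hle x hx).trans (hab.trans (hge y hy))
  have hmh : ∀ x ∈ mid, ∀ y ∈ high, x ≤ y := fun x hx y hy => (hmem x hx).2.trans (hge y hy)
  have hcard : card (low + (mid + high)) - 2 * m = card mid := by
    simp only [card_add, hlow, hhigh]; omega
  have hcard_real : (card (low + (mid + high)) : ℝ) - 2 * m = card mid := by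
    simp only [card_add, hlow, hhigh]; push_cast; ring
  rw [trimmedMean, sort_add_of_le hlm, sort_add_of_le hmh, hcard, hcard_real,
    List.drop_left' (by rw [Multiset.length_sort, hlow]),
    List.take_left' (Multiset.length_sort _), sum_sort]

theorem qMs_eq_add {n m r : ℕ} (q : ℕ → ℝ) (hmr : m ≤ r) (hrn : r ≤ n) :
    qMs n q = (Ico r n).val.map q + ((Ico m r).val.map q + (range m).val.map q) := by
  have hsplit : (range n).val = (range m).val + (Ico m r).val + (Ico r n).val := by
    simp only [range_eq_Ico]
    change Multiset.Ico 0 n = Multiset.Ico 0 m + Multiset.Ico m r + Multiset.Ico r n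
    rw [Multiset.Ico_add_Ico_eq_Ico (Nat.zero_le m) hmr,
      Multiset.Ico_add_Ico_eq_Ico (Nat.zero_le r) hrn]
  rw [qMs, hsplit]
  simp only [Multiset.map_add]
  abel

theorem sum_div_card_replicate_add_map_Ico {n m r : ℕ} (q : ℕ → ℝ) (hmr : m < r) (hrn : r < n)
    {c w : ℝ} (hc : c = (((n : ℝ) - m) * w - ∑ h ∈ Ico m r, q h) / ((n : ℝ) - r)) :
    (Multiset.replicate (n - r) c + (Ico m r).val.map q).sum /
      Multiset.card (Multiset.replicate (n - r) c + (Ico m r).val.map q) = w := by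
  have hnr : (n : ℝ) - r ≠ 0 := sub_ne_zero.2 (by exact_mod_cast hrn.ne')
  have hnm : (n : ℝ) - m ≠ 0 := sub_ne_zero.2 (by exact_mod_cast (hmr.trans hrn).ne')
  have hsum : (Multiset.replicate (n - r) c + (Ico m r).val.map q).sum =
      ((n : ℝ) - r) * c + ∑ h ∈ Ico m r, q h := by
    simp only [Multiset.sum_add, Multiset.sum_replicate, nsmul_eq_mul, Nat.cast_sub hrn.le]; rfl
  have hcard : (Multiset.card (Multiset.replicate (n - r) c + (Ico m r).val.map q) : ℝ) =
      n - m := by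
    simp only [Multiset.card_add, Multiset.card_replicate, Multiset.card_map, card_val,
      Nat.card_Ico]
    push_cast [Nat.cast_sub hrn.le, Nat.cast_sub hmr.le]; ring
  rw [hsum, hcard, hc]
  field_simp
  ring

theorem stmt14_general (n m : ℕ) (hn : 2 * m + 1 ≤ n) (q : ℕ → ℝ)
    (hq : ∀ i j, i ≤ j → j < n → q j ≤ q i) (b wstar : ℝ) (hb : 0 < b)
    (r : ℕ) (hr1 : n - m ≤ r) (hr2 : r ≤ n - 1)
    (c : ℝ)
    (hc : c = (((n : ℝ) - m) * wstar - ∑ h ∈ Finset.Ico m r, q h) / ((n : ℝ) - r))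
    (hc1 : q r < c) (hc2 : c ≤ q (m - 1)) :
    trimmedMean m (qMs n q + (Multiset.replicate (m + r - n) (q (n - 1) - b) +
      Multiset.replicate (n - r) c)) = wstar := by
  have hmr : m < r := by omega
  have hrn : r < n := by omega
  set low := Multiset.replicate (m + r - n) (q (n - 1) - b) + (Ico r n).val.map q
  set mid := Multiset.replicate (n - r) c + (Ico m r).val.map q
  set high := (range m).val.map q
  have hsplit : qMs n q + (Multiset.replicate (m + r - n) (q (n - 1) - b) +
      Multiset.replicate (n - r) c) = low + (mid + high) := by
    rw [qMs_eq_add q hmr.le hrn.le]; simp only [low, mid, high]; abel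
  have hle : ∀ x ∈ low, x ≤ q r := by
    simp only [low, Multiset.mem_add, Multiset.mem_replicate, Multiset.mem_map, mem_val, mem_Ico]
    rintro x (⟨-, rfl⟩ | ⟨i, hi, rfl⟩)
    · linarith [hq r (n - 1) (by omega) (by omega)]
    · exact hq r i hi.1 hi.2
  have hmem : ∀ x ∈ mid, q r ≤ x ∧ x ≤ q (m - 1) := by
    simp only [mid, Multiset.mem_add, Multiset.mem_replicate, Multiset.mem_map, mem_val, mem_Ico]
    rintro x (⟨-, rfl⟩ | ⟨i, hi, rfl⟩)
    · exact ⟨hc1.le, hc2⟩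
    · exact ⟨hq i r hi.2.le hrn, hq (m - 1) i (by omega) (by omega)⟩
  have hge : ∀ x ∈ high, q (m - 1) ≤ x := by
    simp only [high, Multiset.mem_map, mem_val, mem_range]
    rintro x ⟨i, hi, rfl⟩
    exact hq i (m - 1) (by omega) (by omega)
  rw [hsplit, trimmedMean_add_add (by simp [low]; omega) (by simp [high])
    (hq (m - 1) r (by omega) hrn) hle hmem hge]
  exact sum_div_card_replicate_add_map_Ico q hmr hrn hc

theorem stmt14 (n m : ℕ) (hm : 1 ≤ m) (hn : 2 * m + 1 ≤ n) (q : ℕ → ℝ)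
    (hq : ∀ i j, i ≤ j → j < n → q j ≤ q i) (b wstar : ℝ) (hb : 0 < b)
    (r : ℕ) (hr1 : n - m ≤ r) (hr2 : r ≤ n - 1)
    (hrineq : wstar ≤ (1 / ((n : ℝ) - m)) *
      (((n : ℝ) - r) * q (m - 1) + ∑ h ∈ Finset.Ico m r, q h))
    (hrmax : ∀ r' : ℕ, r' ≤ n →
      wstar ≤ (1 / ((n : ℝ) - m)) *
        (((n : ℝ) - r') * q (m - 1) + ∑ h ∈ Finset.Ico m r', q h) → r' ≤ r)
    (c : ℝ)
    (hc : c = (((n : ℝ) - m) * wstar - ∑ h ∈ Finset.Ico m r, q h) / ((n : ℝ) - r))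
    (hc1 : q r < c) (hc2 : c ≤ q (m - 1)) :
    trimmedMean m (qMs n q + (Multiset.replicate (m + r - n) (q (n - 1) - b) +
      Multiset.replicate (n - r) c)) = wstar :=
  stmt14_general n m hn q hq b wstar hb r hr1 hr2 c hc hc1 hc2
end
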